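/- Let X be a complex Banach space, A a bounded linear operator on X, 2 < α < 3 real, γ ∈ ℝ, λ a positive integer, (S_α(n))_{n ≥ −λ} the α-resolvent sequence generated by A, α, γ, λ, h_α the scalar sequence of Definition 3.7, and f : ℕ → X any sequence. Define u : {n ∈ ℤ : n ≥ −λ} → X by u(i) = 0 for −λ ≤ i ≤ 2 and u(n) = (h_α * S_α * f)(n−3) for n ≥ 3. Then u solves the delayed fractional difference equation: Δ^α u(n) = A u(n) + γ u(n−λ) + f(n) for every n ∈ ℕ, where Δ^α is applied to the restriction of u to ℕ. -/

import Mathlib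

/-- The kernel `k^β(j) = Γ(β+j)/(Γ(β)Γ(j+1))`. -/
noncomputable def kker (β : ℝ) (j : ℕ) : ℝ :=
  Real.Gamma (β + j) / (Real.Gamma β * Real.Gamma (j + 1))

/-- Finite convolution of a scalar sequence with a vector-valued sequence:
`(a*g)(n) = Σ_{j=0}^n a(n−j) • g(j)`. -/
noncomputable def conv {R M : Type*} [Semiring R] [AddCommMonoid M] [Module R M]
    (a : ℕ → R) (g : ℕ → M) (n : ℕ) : M :=
  ∑ j ∈ Finset.range (n + 1), a (n - j) • g j

/-- Forward difference `Δu(n) = u(n+1) − u(n)`. -/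
def fdiff {M : Type*} [AddCommGroup M] (u : ℕ → M) (n : ℕ) : M := u (n + 1) - u n

/-- Riemann–Liouville fractional difference of order `α` (for `2 < α < 3`):
`Δ^α u(n) = Δ³ (k^{3−α} * u)(n)`. -/
noncomputable def fracDiff {M : Type*} [AddCommGroup M] [Module ℝ M]
    (α : ℝ) (u : ℕ → M) (n : ℕ) : M :=
  fdiff (fdiff (fdiff (conv (kker (3 - α)) u))) n

/-- Finite convolution of an operator-valued sequence with a vector-valued
sequence: `(T*f)(n) = Σ_{j=0}^n T(n−j) (f j)`. -/
noncomputable def convOp {X : Type*} [NormedAddCommGroup X] [NormedSpace ℂ X]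
    (T : ℕ → X →L[ℂ] X) (f : ℕ → X) (n : ℕ) : X :=
  ∑ j ∈ Finset.range (n + 1), (T (n - j)) (f j)

/-- `S` is the `α`-resolvent sequence generated by `A, α, γ, lam` (Definition 3.1):
`S(−i) = 0` for `i = 1,…,lam`; `S(0) = S(1) = S(2) = I`; and for all `n ∈ ℕ`,
`S(n+3) − 2S(n+2) + S(n+1) = A∘(k^{α−2}*S)(n) + γ·(k^{α−2}*S^λ)(n)
 + k^{α−2}(n+3)I + (1−α)k^{α−2}(n+2)I + ((α−1)(α−2)/2)k^{α−2}(n+1)I`,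
where `S^λ(n) = S(n−lam)`. -/
def IsResolvent {X : Type*} [NormedAddCommGroup X] [NormedSpace ℂ X]
    (A : X →L[ℂ] X) (α : ℝ) (γ : ℝ) (lam : ℕ) (S : ℤ → X →L[ℂ] X) : Prop :=
  (∀ i : ℕ, 1 ≤ i → i ≤ lam → S (-(i : ℤ)) = 0) ∧
  S 0 = 1 ∧ S 1 = 1 ∧ S 2 = 1 ∧
  ∀ n : ℕ, S ((n : ℤ) + 3) - 2 • S ((n : ℤ) + 2) + S ((n : ℤ) + 1) =
    A.comp (conv (kker (α - 2)) (fun m : ℕ => S (m : ℤ)) n)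
    + γ • conv (kker (α - 2)) (fun m : ℕ => S ((m : ℤ) - (lam : ℤ))) n
    + kker (α - 2) (n + 3) • (1 : X →L[ℂ] X)
    + ((1 - α) * kker (α - 2) (n + 2)) • (1 : X →L[ℂ] X)
    + ((α - 1) * (α - 2) / 2 * kker (α - 2) (n + 1)) • (1 : X →L[ℂ] X)

/-- The scalar sequence `h_α` of Definition 3.7: `h_α(0) = 1`, `h_α(1) = α−1`,
`h_α(2) = α(α−1)/2`, and
`h_α(n+3) + (1−α)h_α(n+2) + ((α−1)(α−2)/2)h_α(n+1) = 0` for `n ∈ ℕ`. -/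
noncomputable def hseq (α : ℝ) : ℕ → ℝ
  | 0 => 1
  | 1 => α - 1
  | 2 => α * (α - 1) / 2
  | n + 3 => (α - 1) * hseq α (n + 2) - ((α - 1) * (α - 2) / 2) * hseq α (n + 1)

section AuxSeq

open Finset

/-- shift by `m` with zero padding -/
def sh {M : Type*} [Zero M] (m : ℕ) (g : ℕ → M) : ℕ → M :=
  fun n => if m ≤ n then g (n - m) else 0

noncomputable def qseq : ℕ → ℝ := fun n =>
  if n = 0 then 1 else if n = 1 then -3 else if n = 2 then 3 else if n = 3 then -1 else 0

noncomputable def rseq : ℕ → ℝ := fun n =>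
  if n = 0 then 1 else if n = 1 then -2 else if n = 2 then 1 else 0

noncomputable def pseq (α : ℝ) : ℕ → ℝ := fun n =>
  if n = 0 then 1 else if n = 1 then 1 - α else if n = 2 then (α - 1) * (α - 2) / 2 else 0

noncomputable def dseq : ℕ → ℝ := fun n => if n = 0 then 1 else 0

lemma qseq_big {j : ℕ} (h : 4 ≤ j) : qseq j = 0 := by
  unfold qseq
  rw [if_neg (by omega), if_neg (by omega), if_neg (by omega), if_neg (by omega)]

lemma rseq_big {j : ℕ} (h : 3 ≤ j) : rseq j = 0 := by
  unfold rseq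
  rw [if_neg (by omega), if_neg (by omega), if_neg (by omega)]

lemma pseq_big (α : ℝ) {j : ℕ} (h : 3 ≤ j) : pseq α j = 0 := by
  unfold pseq
  rw [if_neg (by omega), if_neg (by omega), if_neg (by omega)]

lemma sum_triangle {N : Type*} [AddCommMonoid N] (n : ℕ) (F : ℕ → ℕ → N) :
    ∑ m ∈ range (n+1), ∑ i ∈ range (m+1), F m i
      = ∑ i ∈ range (n+1), ∑ t ∈ range (n - i + 1), F (i + t) i := by
  have h1 : ∀ m ∈ range (n+1), (∑ i ∈ range (m+1), F m i)
      = ∑ i ∈ range (n+1), if i ≤ m then F m i else 0 := by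
    intro m hm
    rw [mem_range] at hm
    have : ∑ i ∈ range (n+1), (if i ≤ m then F m i else 0)
        = ∑ i ∈ range (m+1), F m i := by
      rw [Finset.sum_ite, Finset.sum_const_zero, add_zero]
      apply Finset.sum_congr _ fun _ _ => rfl
      ext i; simp only [mem_filter, mem_range]; omega
    exact this.symm
  rw [Finset.sum_congr rfl h1, Finset.sum_comm]
  refine Finset.sum_congr rfl fun i hi => ?_
  rw [mem_range] at hi
  rw [Finset.sum_ite, Finset.sum_const_zero, add_zero]
  have hf : Finset.filter (fun m => i ≤ m) (range (n+1)) = Finset.Ico i (n+1) := by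
    ext m; simp only [mem_filter, mem_range, mem_Ico]; omega
  rw [hf, Finset.sum_Ico_eq_sum_range, show n + 1 - i = n - i + 1 from by omega]

section ConvM

variable {M : Type*} [AddCommGroup M] [Module ℝ M]

lemma conv_assoc' (a c : ℕ → ℝ) (g : ℕ → M) (n : ℕ) :
    conv a (conv c g) n = conv (conv a c) g n := by
  unfold conv
  simp only [Finset.smul_sum, smul_smul, smul_eq_mul]
  rw [sum_triangle n (fun m i => (a (n - m) * c (m - i)) • g i)]
  refine Finset.sum_congr rfl fun i hi => ?_
  rw [mem_range] at hi
  rw [Finset.sum_smul]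
  refine Finset.sum_congr rfl fun t ht => ?_
  rw [mem_range] at ht
  rw [show n - (i + t) = n - i - t from by omega, show i + t - i = t from by omega]

lemma conv_comm' (a c : ℕ → ℝ) (n : ℕ) : conv a c n = conv c a n := by
  unfold conv
  rw [← Finset.sum_range_reflect]
  refine Finset.sum_congr rfl fun j hj => ?_
  rw [mem_range] at hj
  rw [show n + 1 - 1 - j = n - j from by omega, show n - (n - j) = j from by omega,
    smul_eq_mul, smul_eq_mul, mul_comm]

lemma conv_sh (a : ℕ → ℝ) (m : ℕ) (g : ℕ → M) (n : ℕ) :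
    conv a (sh m g) n = sh m (conv a g) n := by
  unfold conv sh
  by_cases h : m ≤ n
  · rw [if_pos h]
    have h1 : ∀ j ∈ range (n+1), a (n-j) • (if m ≤ j then g (j-m) else 0)
        = if m ≤ j then a (n-j) • g (j-m) else 0 := by
      intro j _; split <;> simp
    rw [Finset.sum_congr rfl h1, Finset.sum_ite, Finset.sum_const_zero, add_zero]
    have hf : Finset.filter (fun j => m ≤ j) (range (n+1)) = Finset.Ico m (n+1) := by
      ext j; simp only [mem_filter, mem_range, mem_Ico]; omega
    rw [hf, Finset.sum_Ico_eq_sum_range, show n + 1 - m = n - m + 1 from by omega]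
    refine Finset.sum_congr rfl fun t ht => ?_
    rw [mem_range] at ht
    rw [show n - (m + t) = n - m - t from by omega, show m + t - m = t from by omega]
  · rw [if_neg h]
    refine Finset.sum_eq_zero fun j hj => ?_
    rw [mem_range] at hj
    rw [if_neg (by omega), smul_zero]

lemma conv_dseq (g : ℕ → M) (n : ℕ) : conv dseq g n = g n := by
  unfold conv
  rw [Finset.sum_eq_single n]
  · simp [dseq]
  · intro j hj hne
    rw [mem_range] at hj
    rw [show dseq (n - j) = 0 from by unfold dseq; rw [if_neg (by omega)], zero_smul]
  · intro hn; exact absurd (Finset.self_mem_range_succ n) hn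

lemma conv_cancel {a : ℕ → ℝ} (ha : a 0 = 1) {x y : ℕ → M}
    (h : ∀ n, conv a x n = conv a y n) (n : ℕ) : x n = y n := by
  induction n using Nat.strong_induction_on with
  | _ n ih =>
    have hn := h n
    unfold conv at hn
    rw [Finset.sum_range_succ, Finset.sum_range_succ, Nat.sub_self, ha, one_smul, one_smul] at hn
    have hsum : ∑ j ∈ range n, a (n-j) • x j = ∑ j ∈ range n, a (n-j) • y j :=
      Finset.sum_congr rfl fun j hj => by rw [ih j (mem_range.mp hj)]
    rw [hsum] at hn
    exact add_left_cancel hn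

lemma conv_zero' (a : ℕ → ℝ) (g : ℕ → M) : conv a g 0 = a 0 • g 0 := by
  simp [conv]

lemma conv_one' (a : ℕ → ℝ) (g : ℕ → M) : conv a g 1 = a 1 • g 0 + a 0 • g 1 := by
  unfold conv
  rw [Finset.sum_range_succ, Finset.sum_range_succ, Finset.sum_range_zero, zero_add]

lemma conv_two' (a : ℕ → ℝ) (g : ℕ → M) :
    conv a g 2 = a 2 • g 0 + a 1 • g 1 + a 0 • g 2 := by
  unfold conv
  rw [Finset.sum_range_succ, Finset.sum_range_succ, Finset.sum_range_succ,
    Finset.sum_range_zero, zero_add]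

lemma conv_eval3 {a : ℕ → ℝ} (ha : ∀ j, 3 ≤ j → a j = 0) (g : ℕ → M) (n : ℕ) :
    conv a g (n+3) = a 2 • g (n+1) + a 1 • g (n+2) + a 0 • g (n+3) := by
  unfold conv
  rw [show n + 3 + 1 = (n + 1) + 1 + 1 + 1 from by omega]
  rw [Finset.sum_range_succ, Finset.sum_range_succ, Finset.sum_range_succ]
  have h0 : ∑ j ∈ range (n+1), a (n+3-j) • g j = 0 :=
    Finset.sum_eq_zero fun j hj => by
      rw [mem_range] at hj; rw [ha _ (by omega), zero_smul]
  rw [h0, zero_add, show n+3-(n+1) = 2 from by omega, show n+3-(n+1+1) = 1 from by omega,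
      show n+3-(n+1+1+1) = 0 from by omega, show n+1+1 = n+2 from by omega,
      show n+1+1+1 = n+3 from by omega]

lemma conv_eval4 {a : ℕ → ℝ} (ha : ∀ j, 4 ≤ j → a j = 0) (g : ℕ → M) (n : ℕ) :
    conv a g (n+3) = a 3 • g n + a 2 • g (n+1) + a 1 • g (n+2) + a 0 • g (n+3) := by
  unfold conv
  rw [show n + 3 + 1 = n + 1 + 1 + 1 + 1 from by omega]
  rw [Finset.sum_range_succ, Finset.sum_range_succ, Finset.sum_range_succ,
    Finset.sum_range_succ]
  have h0 : ∑ j ∈ range n, a (n+3-j) • g j = 0 :=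
    Finset.sum_eq_zero fun j hj => by
      rw [mem_range] at hj; rw [ha _ (by omega), zero_smul]
  rw [h0, zero_add, show n+3-n = 3 from by omega, show n+3-(n+1) = 2 from by omega,
      show n+3-(n+1+1) = 1 from by omega, show n+3-(n+1+1+1) = 0 from by omega,
      show n+1+1 = n+2 from by omega, show n+1+1+1 = n+3 from by omega]

lemma sh_eval {M : Type*} [Zero M] (m k : ℕ) (g : ℕ → M) : sh m g (k + m) = g k := by
  unfold sh
  rw [if_pos (Nat.le_add_left m k), Nat.add_sub_cancel]

lemma sh_low {M : Type*} [Zero M] {m n : ℕ} (h : n < m) (g : ℕ → M) : sh m g n = 0 := by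
  unfold sh; rw [if_neg (by omega)]

lemma fdiff3_sh (G : ℕ → M) (n : ℕ) :
    fdiff (fdiff (fdiff (sh 3 G))) n = conv qseq G n := by
  rcases n with _|_|_|m
  · simp only [fdiff, sh, conv]
    norm_num [qseq]
  · simp only [fdiff, sh, conv, Finset.sum_range_succ, Finset.sum_range_zero]
    norm_num [qseq]
    module
  · simp only [fdiff, sh, conv, Finset.sum_range_succ, Finset.sum_range_zero]
    norm_num [qseq]
    module
  · rw [conv_eval4 (fun j hj => qseq_big hj) G m]
    simp only [fdiff]
    rw [show m+3+1+1+1 = (m+3)+3 from by omega, show m+3+1+1 = (m+2)+3 from by omega,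
      show m+3+1 = (m+1)+3 from by omega]
    rw [sh_eval, sh_eval, sh_eval, sh_eval]
    norm_num [qseq]
    module

end ConvM
end AuxSeq
section KkerLemmas
open Finset

lemma kker_zero {β : ℝ} (hβ : 0 < β) : kker β 0 = 1 := by
  unfold kker
  push_cast
  rw [add_zero, zero_add, Real.Gamma_one, mul_one,
    div_self (Real.Gamma_pos_of_pos hβ).ne']

lemma kker_succ {β : ℝ} (hβ : 0 < β) (j : ℕ) :
    ((j:ℝ) + 1) * kker β (j+1) = (β + j) * kker β j := by
  have hb : Real.Gamma β ≠ 0 := (Real.Gamma_pos_of_pos hβ).ne'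
  have hbj : β + (j:ℝ) ≠ 0 :=
    (add_pos_of_pos_of_nonneg hβ (Nat.cast_nonneg j)).ne'
  have hj0 : ((j:ℝ) + 1) ≠ 0 := by positivity
  have hj : Real.Gamma ((j:ℝ) + 1) ≠ 0 :=
    (Real.Gamma_pos_of_pos (by positivity)).ne'
  unfold kker
  push_cast
  rw [show β + ((j:ℝ) + 1) = (β + j) + 1 from by ring, Real.Gamma_add_one hbj,
    show (j:ℝ) + 1 + 1 = ((j:ℝ) + 1) + 1 from by ring, Real.Gamma_add_one hj0]
  field_simp

lemma kker_succ' {β : ℝ} (hβ : 0 < β) (j : ℕ) :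
    ((j + 1 : ℕ) : ℝ) * kker β (j+1) = (β + j) * kker β j := by
  push_cast
  exact kker_succ hβ j

lemma kker_one_val {β : ℝ} (hβ : 0 < β) : kker β 1 = β := by
  have h := kker_succ hβ 0
  rw [kker_zero hβ] at h
  push_cast at h
  linarith

lemma kker_two_val {β : ℝ} (hβ : 0 < β) : kker β 2 = β * (β + 1) / 2 := by
  have h := kker_succ hβ 1
  rw [kker_one_val hβ] at h
  push_cast at h
  linarith

lemma conv_kker {β δ : ℝ} (hβ : 0 < β) (hδ : 0 < δ) (n : ℕ) :
    conv (kker β) (kker δ) n = kker (β + δ) n := by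
  induction n with
  | zero =>
    unfold conv
    rw [Finset.sum_range_one]
    norm_num [kker_zero hβ, kker_zero hδ, kker_zero (by linarith : (0:ℝ) < β + δ)]
  | succ n ih =>
    have hbd : (0:ℝ) < β + δ := by linarith
    have hne : ((n:ℝ) + 1) ≠ 0 := by positivity
    apply mul_left_cancel₀ hne
    rw [kker_succ hbd n, ← ih]
    unfold conv
    simp only [smul_eq_mul]
    rw [Finset.mul_sum, Finset.mul_sum]
    have split : ∀ j ∈ range (n+1+1),
        ((n:ℝ)+1) * (kker β (n+1-j) * kker δ j)
          = (((n+1-j : ℕ):ℝ) * kker β (n+1-j)) * kker δ j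
            + kker β (n+1-j) * ((j:ℝ) * kker δ j) := by
      intro j hj
      rw [mem_range] at hj
      have hcast : ((n+1-j : ℕ):ℝ) = (n:ℝ) + 1 - j := by
        rw [Nat.cast_sub (by omega : j ≤ n+1)]
        push_cast; ring
      rw [hcast]; ring
    rw [Finset.sum_congr rfl split, Finset.sum_add_distrib]
    have s1 : ∑ j ∈ range (n+1+1), (((n+1-j : ℕ):ℝ) * kker β (n+1-j)) * kker δ j
        = ∑ j ∈ range (n+1), ((β + ((n-j : ℕ):ℝ)) * kker β (n-j)) * kker δ j := by
      rw [Finset.sum_range_succ, Nat.sub_self]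
      norm_num
      refine Finset.sum_congr rfl fun j hj => ?_
      rw [mem_range] at hj
      rw [show n + 1 - j = (n - j) + 1 from by omega, kker_succ' hβ (n-j)]
    have s2 : ∑ j ∈ range (n+1+1), kker β (n+1-j) * ((j:ℝ) * kker δ j)
        = ∑ j ∈ range (n+1), kker β (n-j) * ((δ + ((j : ℕ):ℝ)) * kker δ j) := by
      rw [Finset.sum_range_succ']
      norm_num
      refine Finset.sum_congr rfl fun i hi => ?_
      rw [mem_range] at hi
      rw [show n + 1 - (i+1) = n - i from by omega,
        show ((i:ℝ) + 1) = ((i + 1 : ℕ) : ℝ) from by push_cast; ring,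
        kker_succ' hδ i]
    rw [s1, s2, ← Finset.sum_add_distrib]
    refine Finset.sum_congr rfl fun j hj => ?_
    rw [mem_range] at hj
    rw [show ((n-j:ℕ):ℝ) = (n:ℝ) - j from by rw [Nat.cast_sub (by omega)]]
    ring

lemma conv_kker_one {α : ℝ} (hα1 : 2 < α) (hα2 : α < 3) (n : ℕ) :
    conv (kker (α - 2)) (kker (3 - α)) n = 1 := by
  rw [conv_kker (by linarith) (by linarith), show α - 2 + (3 - α) = 1 from by ring]
  unfold kker
  rw [Real.Gamma_one, one_mul, add_comm,
    div_self (Real.Gamma_pos_of_pos (by positivity : (0:ℝ) < (n:ℝ)+1)).ne']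

end KkerLemmas
section ScalarIds
open Finset

lemma sum_qseq (n : ℕ) : ∑ j ∈ range (n+1), qseq j = rseq n := by
  induction n with
  | zero => norm_num [qseq, rseq]
  | succ n ih =>
    rw [Finset.sum_range_succ, ih]
    rcases n with _|_|_|k
    · norm_num [qseq, rseq]
    · norm_num [qseq, rseq]
    · norm_num [qseq, rseq]
    · rw [rseq_big (by omega), qseq_big (by omega), rseq_big (by omega), add_zero]

lemma conv_one_qseq (n : ℕ) : conv (fun _ : ℕ => (1:ℝ)) qseq n = rseq n := by
  unfold conv
  simp only [smul_eq_mul, one_mul]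
  exact sum_qseq n

lemma conv_pseq_hseq (α : ℝ) (n : ℕ) : conv (pseq α) (hseq α) n = dseq n := by
  rcases n with _|_|_|m
  · rw [conv_zero']
    norm_num [pseq, hseq, dseq]
  · rw [conv_one']
    norm_num [pseq, hseq, dseq]
    try ring
  · rw [conv_two']
    norm_num [pseq, hseq, dseq]
    ring
  · rw [conv_eval3 (fun j hj => pseq_big α hj) (hseq α) m]
    have hd : dseq (m+3) = 0 := by unfold dseq; rw [if_neg (by omega)]
    have hh : hseq α (m+3)
        = (α - 1) * hseq α (m + 2) - ((α - 1) * (α - 2) / 2) * hseq α (m + 1) := by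
      simp [hseq]
    rw [hd, hh]
    norm_num [pseq]
    ring

-- key scalar identity: (kker (α-2)) * qseq * (kker (3-α)) = rseq
lemma scalar_key {α : ℝ} (hα1 : 2 < α) (hα2 : α < 3) (n : ℕ) :
    conv (conv (kker (α-2)) qseq) (kker (3-α)) n = rseq n := by
  rw [← conv_assoc']
  rw [show conv qseq (kker (3-α)) = conv (kker (3-α)) qseq from
    funext fun i => conv_comm' _ _ i]
  rw [conv_assoc']
  rw [show conv (kker (α-2)) (kker (3-α)) = (fun _ : ℕ => (1:ℝ)) from
    funext fun i => conv_kker_one hα1 hα2 i]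
  exact conv_one_qseq n

end ScalarIds

section OpLemmas
open Finset

variable {X : Type*} [NormedAddCommGroup X] [NormedSpace ℂ X]

lemma convOp_conv (a : ℕ → ℝ) (T : ℕ → X →L[ℂ] X) (f : ℕ → X) (n : ℕ) :
    convOp (conv a T) f n = conv a (convOp T f) n := by
  unfold convOp conv
  simp only [ContinuousLinearMap.coe_sum', Finset.sum_apply,
    ContinuousLinearMap.coe_smul', Pi.smul_apply, Finset.smul_sum]
  rw [sum_triangle n (fun m i => a (n - m) • (T (m - i)) (f i))]
  refine Finset.sum_congr rfl fun j hj => ?_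
  rw [mem_range] at hj
  refine Finset.sum_congr rfl fun t ht => ?_
  rw [mem_range] at ht
  rw [show n - (j + t) = n - j - t from by omega, show j + t - j = t from by omega]

lemma convOp_sh (m : ℕ) (T : ℕ → X →L[ℂ] X) (f : ℕ → X) (n : ℕ) :
    convOp (sh m T) f n = sh m (convOp T f) n := by
  unfold convOp sh
  by_cases h : m ≤ n
  · rw [if_pos h]
    have h1 : ∀ j ∈ range (n+1),
        (if m ≤ n - j then T (n - j - m) else 0) (f j)
          = if j ≤ n - m then (T (n - m - j)) (f j) else 0 := by
      intro j hj
      rw [mem_range] at hj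
      by_cases hc : m ≤ n - j
      · rw [if_pos hc, if_pos (by omega), show n - j - m = n - m - j from by omega]
      · rw [if_neg hc, if_neg (by omega), ContinuousLinearMap.zero_apply]
    rw [Finset.sum_congr rfl h1, Finset.sum_ite, Finset.sum_const_zero, add_zero]
    have hf : Finset.filter (fun j => j ≤ n - m) (range (n+1)) = range (n - m + 1) := by
      ext j; simp only [mem_filter, mem_range]; omega
    rw [hf]
  · rw [if_neg h]
    refine Finset.sum_eq_zero fun j hj => ?_
    rw [mem_range] at hj
    rw [if_neg (by omega), ContinuousLinearMap.zero_apply]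

end OpLemmas
section Star
open Finset

variable {X : Type*} [NormedAddCommGroup X] [NormedSpace ℂ X]

lemma star_op (A : X →L[ℂ] X) {α : ℝ} (hα1 : 2 < α) (hα2 : α < 3) (γ : ℝ)
    (lam : ℕ) (S : ℤ → X →L[ℂ] X) (hS : IsResolvent A α γ lam S)
    (m : ℕ) :
    conv rseq (fun i : ℕ => S (i:ℤ)) m
      = A.comp (sh 3 (conv (kker (α-2)) (fun i : ℕ => S (i:ℤ))) m)
        + γ • sh (lam+3) (conv (kker (α-2)) (fun i : ℕ => S (i:ℤ))) m
        + conv (pseq α) (kker (α-2)) m • (1 : X →L[ℂ] X) := by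
  obtain ⟨hSneg, hS0, hS1, hS2, hrec⟩ := hS
  have hb : (0:ℝ) < α - 2 := by linarith
  have hb0 : kker (α-2) 0 = 1 := kker_zero hb
  have hb1 : kker (α-2) 1 = α - 2 := kker_one_val hb
  have hb2 : kker (α-2) 2 = (α-2) * (α-1) / 2 := by
    rw [kker_two_val hb]; ring_nf
  rcases m with _|_|_|n
  · rw [conv_zero', conv_zero', sh_low (by omega), sh_low (by omega)]
    simp only [Nat.cast_zero, hS0, ContinuousLinearMap.comp_zero, smul_zero,
      zero_add, add_zero]
    norm_num [rseq, pseq, hb0]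
  · rw [conv_one', conv_one', sh_low (by omega), sh_low (by omega)]
    simp only [Nat.cast_zero, Nat.cast_one, hS0, hS1, ContinuousLinearMap.comp_zero,
      smul_zero, zero_add, add_zero]
    norm_num [rseq, pseq, hb0, hb1]
    module
  · rw [conv_two', conv_two', sh_low (by omega), sh_low (by omega)]
    simp only [Nat.cast_zero, Nat.cast_one, Nat.cast_ofNat, hS0, hS1, hS2,
      ContinuousLinearMap.comp_zero, smul_zero, zero_add, add_zero]
    norm_num [rseq, pseq, hb0, hb1, hb2]
    module
  · rw [conv_eval3 (fun j hj => rseq_big hj) (fun i : ℕ => S (i:ℤ)) n,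
        conv_eval3 (fun j hj => pseq_big α hj) (kker (α-2)) n]
    have sh1 : sh 3 (conv (kker (α-2)) (fun i : ℕ => S (i:ℤ))) (n+3)
        = conv (kker (α-2)) (fun i : ℕ => S (i:ℤ)) n := sh_eval 3 n _
    have hlamseq : (fun i : ℕ => S ((i:ℤ) - (lam:ℤ)))
        = sh lam (fun i : ℕ => S (i:ℤ)) := by
      funext i
      by_cases h : lam ≤ i
      · unfold sh
        rw [if_pos h]
        congr 1
        omega
      · unfold sh
        rw [if_neg h]
        rw [show (i:ℤ) - (lam:ℤ) = -(((lam - i : ℕ)):ℤ) from by omega]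
        exact hSneg (lam - i) (by omega) (by omega)
    have sh2 : sh (lam+3) (conv (kker (α-2)) (fun i : ℕ => S (i:ℤ))) (n+3)
        = conv (kker (α-2)) (fun i : ℕ => S ((i:ℤ) - (lam:ℤ))) n := by
      rw [hlamseq, conv_sh]
      unfold sh
      by_cases h : lam ≤ n
      · rw [if_pos (by omega : lam + 3 ≤ n + 3), if_pos h,
          show n + 3 - (lam+3) = n - lam from by omega]
      · rw [if_neg (by omega : ¬ lam + 3 ≤ n + 3), if_neg h]
    rw [sh1, sh2]
    have hrecn := hrec n
    have h2 : (2:ℕ) • S ((n:ℤ)+2) = (2:ℝ) • S ((n:ℤ)+2) := by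
      rw [← Nat.cast_smul_eq_nsmul ℝ]
      norm_num
    rw [h2] at hrecn
    calc rseq 2 • S ((n+1:ℕ):ℤ) + rseq 1 • S ((n+2:ℕ):ℤ) + rseq 0 • S ((n+3:ℕ):ℤ)
        = S ((n:ℤ)+3) - (2:ℝ) • S ((n:ℤ)+2) + S ((n:ℤ)+1) := by
          rw [show ((n+1:ℕ):ℤ) = (n:ℤ)+1 from by push_cast; ring,
            show ((n+2:ℕ):ℤ) = (n:ℤ)+2 from by push_cast; ring,
            show ((n+3:ℕ):ℤ) = (n:ℤ)+3 from by push_cast; ring]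
          norm_num [rseq]
          module
      _ = A.comp (conv (kker (α - 2)) (fun i : ℕ => S (i : ℤ)) n)
          + γ • conv (kker (α - 2)) (fun i : ℕ => S ((i : ℤ) - (lam : ℤ))) n
          + kker (α - 2) (n + 3) • (1 : X →L[ℂ] X)
          + ((1 - α) * kker (α - 2) (n + 2)) • (1 : X →L[ℂ] X)
          + ((α - 1) * (α - 2) / 2 * kker (α - 2) (n + 1)) • (1 : X →L[ℂ] X) := hrecn
      _ = A.comp (conv (kker (α-2)) (fun i : ℕ => S (i:ℤ)) n)
          + γ • conv (kker (α-2)) (fun i : ℕ => S ((i:ℤ) - (lam:ℤ))) n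
          + (pseq α 2 • kker (α-2) (n+1) + pseq α 1 • kker (α-2) (n+2)
             + pseq α 0 • kker (α-2) (n+3)) • (1 : X →L[ℂ] X) := by
          norm_num [pseq]
          module

end Star
section Distrib
open Finset

variable {X : Type*} [NormedAddCommGroup X] [NormedSpace ℂ X]

lemma convOp_distrib (A : X →L[ℂ] X) (γ : ℝ) (G₁ G₂ : ℕ → X →L[ℂ] X)
    (w : ℕ → ℝ) (f : ℕ → X) (m : ℕ) :
    convOp (fun i => A.comp (G₁ i) + γ • G₂ i + w i • (1 : X →L[ℂ] X)) f m
      = A (convOp G₁ f m) + γ • convOp G₂ f m + conv w f m := by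
  unfold convOp conv
  rw [map_sum, Finset.smul_sum, ← Finset.sum_add_distrib, ← Finset.sum_add_distrib]
  refine Finset.sum_congr rfl fun j _ => ?_
  simp [ContinuousLinearMap.add_apply, ContinuousLinearMap.smul_apply,
    ContinuousLinearMap.comp_apply, ContinuousLinearMap.one_apply]

lemma conv_distrib (A : X →L[ℂ] X) (γ : ℝ) (a : ℕ → ℝ) (g₁ g₂ g₃ : ℕ → X) (m : ℕ) :
    conv a (fun i => A (g₁ i) + γ • g₂ i + g₃ i) m
      = A (conv a g₁ m) + γ • conv a g₂ m + conv a g₃ m := by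
  unfold conv
  rw [map_sum, Finset.smul_sum, ← Finset.sum_add_distrib, ← Finset.sum_add_distrib]
  refine Finset.sum_congr rfl fun j _ => ?_
  rw [A.map_smul_of_tower, smul_add, smul_add, smul_comm (a (m - j)) γ]

lemma star_V (A : X →L[ℂ] X) {α : ℝ} (hα1 : 2 < α) (hα2 : α < 3) (γ : ℝ)
    (lam : ℕ) (S : ℤ → X →L[ℂ] X) (hS : IsResolvent A α γ lam S)
    (f : ℕ → X) (m : ℕ) :
    conv rseq (convOp (fun i : ℕ => S (i:ℤ)) f) m
      = A (sh 3 (conv (kker (α-2)) (convOp (fun i : ℕ => S (i:ℤ)) f)) m)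
        + γ • sh (lam+3) (conv (kker (α-2)) (convOp (fun i : ℕ => S (i:ℤ)) f)) m
        + conv (conv (pseq α) (kker (α-2))) f m := by
  have h1 : conv rseq (convOp (fun i : ℕ => S (i:ℤ)) f) m
      = convOp (conv rseq (fun i : ℕ => S (i:ℤ))) f m := (convOp_conv _ _ _ _).symm
  rw [h1]
  have h2 : convOp (conv rseq (fun i : ℕ => S (i:ℤ))) f m
      = convOp (fun i => A.comp (sh 3 (conv (kker (α-2)) (fun i : ℕ => S (i:ℤ))) i)
          + γ • sh (lam+3) (conv (kker (α-2)) (fun i : ℕ => S (i:ℤ))) i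
          + conv (pseq α) (kker (α-2)) i • (1 : X →L[ℂ] X)) f m := by
    unfold convOp
    exact Finset.sum_congr rfl fun j _ => by
      rw [star_op A hα1 hα2 γ lam S hS (m - j)]
  rw [h2, convOp_distrib, convOp_sh, convOp_sh,
    show convOp (conv (kker (α-2)) (fun i : ℕ => S (i:ℤ))) f
      = conv (kker (α-2)) (convOp (fun i : ℕ => S (i:ℤ)) f) from
      funext fun i => convOp_conv _ _ _ i]

lemma main_core (A : X →L[ℂ] X) {α : ℝ} (hα1 : 2 < α) (hα2 : α < 3) (γ : ℝ)
    (lam : ℕ) (S : ℤ → X →L[ℂ] X) (hS : IsResolvent A α γ lam S)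
    (f : ℕ → X) (n : ℕ) :
    fracDiff α (sh 3 (conv (hseq α) (convOp (fun i : ℕ => S (i:ℤ)) f))) n
      = A (sh 3 (conv (hseq α) (convOp (fun i : ℕ => S (i:ℤ)) f)) n)
        + γ • sh (lam+3) (conv (hseq α) (convOp (fun i : ℕ => S (i:ℤ)) f)) n
        + f n := by
  have hb : (0:ℝ) < α - 2 := by linarith
  set V : ℕ → X := convOp (fun i : ℕ => S (i:ℤ)) f with hV
  set U : ℕ → X := conv (hseq α) V with hU
  refine conv_cancel (a := kker (α-2)) (kker_zero hb)
    (x := fracDiff α (sh 3 U))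
    (y := fun m => A (sh 3 U m) + γ • sh (lam+3) U m + f m) (fun m => ?_) n
  have rhs_eq : conv (kker (α-2)) (fun i => A (sh 3 U i) + γ • sh (lam+3) U i + f i) m
      = A (sh 3 (conv (kker (α-2)) U) m) + γ • sh (lam+3) (conv (kker (α-2)) U) m
        + conv (kker (α-2)) f m := by
    rw [conv_distrib, conv_sh, conv_sh]
  rw [rhs_eq]
  -- now the left side
  have e1 : fracDiff α (sh 3 U) = conv qseq (conv (kker (3-α)) U) := by
    funext j
    unfold fracDiff
    rw [show conv (kker (3-α)) (sh 3 U) = sh 3 (conv (kker (3-α)) U) from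
      funext fun i => conv_sh _ _ _ i]
    exact fdiff3_sh _ j
  rw [e1, conv_assoc', conv_assoc',
    show conv (conv (kker (α-2)) qseq) (kker (3-α)) = rseq from
      funext fun i => scalar_key hα1 hα2 i]
  -- conv rseq U m
  rw [hU, conv_assoc',
    show conv rseq (hseq α) = conv (hseq α) rseq from funext fun i => conv_comm' _ _ i,
    ← conv_assoc',
    show conv rseq V = fun i => A (sh 3 (conv (kker (α-2)) V) i)
        + γ • sh (lam+3) (conv (kker (α-2)) V) i
        + conv (conv (pseq α) (kker (α-2))) f i from
      funext fun i => star_V A hα1 hα2 γ lam S hS f i,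
    conv_distrib, conv_sh, conv_sh]
  have e6 : conv (hseq α) (conv (kker (α-2)) V) = conv (kker (α-2)) (conv (hseq α) V) := by
    funext i
    rw [conv_assoc',
      show conv (hseq α) (kker (α-2)) = conv (kker (α-2)) (hseq α) from
        funext fun t => conv_comm' _ _ t,
      ← conv_assoc']
  have e7 : conv (hseq α) (conv (conv (pseq α) (kker (α-2))) f) m
      = conv (kker (α-2)) f m := by
    rw [conv_assoc']
    have hph : conv (hseq α) (conv (pseq α) (kker (α-2))) = kker (α-2) := by
      funext i
      rw [conv_assoc',
        show conv (hseq α) (pseq α) = dseq from funext fun t => by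
          rw [conv_comm']; exact conv_pseq_hseq α t]
      exact conv_dseq (kker (α-2)) i
    rw [hph]
  rw [e6, e7]

end Distrib
/-- Theorem 3.8 (existence): let `S` be the `α`-resolvent sequence generated by
`A, α, γ, lam`, `h_α` the scalar sequence of Definition 3.7 and `f : ℕ → X`.
If `u : ℤ → X` satisfies `u(i) = 0` for `−lam ≤ i ≤ 2` and
`u(n) = (h_α * S * f)(n−3)` for `n ≥ 3`, then `u` solves the delayed fractional
difference equation `Δ^α u(n) = A u(n) + γ u(n−lam) + f(n)` for every `n ∈ ℕ`. -/
theorem solution_representation {X : Type*} [NormedAddCommGroup X] [NormedSpace ℂ X]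
    (A : X →L[ℂ] X) (α : ℝ) (hα1 : 2 < α) (hα2 : α < 3) (γ : ℝ)
    (lam : ℕ) (hlam : 0 < lam) (S : ℤ → X →L[ℂ] X)
    (hS : IsResolvent A α γ lam S) (f : ℕ → X) (u : ℤ → X)
    (hu0 : ∀ i : ℤ, -(lam : ℤ) ≤ i → i ≤ 2 → u i = 0)
    (hu3 : ∀ n : ℕ, u ((n : ℤ) + 3) = conv (hseq α) (convOp (fun m : ℕ => S (m : ℤ)) f) n) :
    ∀ n : ℕ,
      fracDiff α (fun m : ℕ => u (m : ℤ)) n =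
        A (u (n : ℤ)) + γ • u ((n : ℤ) - (lam : ℤ)) + f n := by
  intro n
  set V : ℕ → X := convOp (fun m : ℕ => S (m : ℤ)) f with hV
  set U : ℕ → X := conv (hseq α) V with hU
  have hu_nat : ∀ m : ℕ, u (m : ℤ) = sh 3 U m := by
    intro m
    rcases m with _|_|_|j
    · rw [sh_low (by omega)]
      exact hu0 _ (by omega) (by omega)
    · rw [sh_low (by omega)]
      exact hu0 _ (by omega) (by omega)
    · rw [sh_low (by omega)]
      exact hu0 _ (by omega) (by omega)
    · rw [sh_eval 3 j U, show ((j + 3 : ℕ) : ℤ) = (j : ℤ) + 3 from by push_cast; ring]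
      exact hu3 j
  have hu_del : u ((n : ℤ) - (lam : ℤ)) = sh (lam + 3) U n := by
    by_cases h : lam + 3 ≤ n
    · obtain ⟨j, hj⟩ : ∃ j, n = j + (lam + 3) := ⟨n - (lam + 3), by omega⟩
      subst hj
      rw [sh_eval (lam + 3) j U,
        show ((j + (lam + 3) : ℕ) : ℤ) - (lam : ℤ) = (j : ℤ) + 3 from by push_cast; ring]
      exact hu3 j
    · rw [sh_low (by omega)]
      exact hu0 _ (by omega) (by omega)
  rw [show (fun m : ℕ => u (m : ℤ)) = sh 3 U from funext hu_nat, hu_nat n, hu_del]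
  exact main_core A hα1 hα2 γ lam S hS f n
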